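/- Let C be a small category with finite products, equipped with a symmetric monoidal structure (⊗, I) such that the tensor − ⊗ − : C × C → C preserves finite products in each variable separately. If F, G : C → Set both preserve finite products, then their Day convolution F ⊗ G, given by the coend (F ⊗ G)(c) = ∫^{c₁,c₂ ∈ C} C(c₁ ⊗ c₂, c) × F(c₁) × G(c₂), also preserves finite products. -/

import Mathlib

open CategoryTheory CategoryTheory.Limits Opposite

universe w v u

namespace Paper

variable {C : Type u} [Category.{v} C]

/-- An object is finitely presentable if its covariant hom-functor preserves
small filtered colimits. -/
def FinPres (A : C) : Prop :=
  ∀ (J : Type v) (_ : SmallCategory J), IsFiltered J →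
    PreservesColimitsOfShape J (coyoneda.obj (op A))

/-- `f` is a regular epimorphism (a coequalizer of some pair). -/
def IsRegEpi {X Y : C} (f : X ⟶ Y) : Prop := Nonempty (RegularEpi f)

/-- `P` is regular projective: `Hom(P,-)` sends regular epimorphisms to surjections. -/
def RegProjective (P : C) : Prop :=
  ∀ ⦃X Y : C⦄ (f : X ⟶ Y), IsRegEpi f → Function.Surjective (fun g : P ⟶ X => g ≫ f)

/-- A regular category: finite limits, coequalizers of kernel pairs, and regular
epimorphisms stable under pullback. -/
structure IsRegularCategory (C : Type u) [Category.{v} C] : Prop where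
  hasFiniteLimits : HasFiniteLimits C
  hasCoequalizersOfKernelPairs :
    ∀ {X Y R : C} (f : X ⟶ Y) (p q : R ⟶ X), IsKernelPair f p q → HasCoequalizer p q
  regEpiPullbackStable :
    ∀ {P X Y Z : C} (fst : P ⟶ X) (snd : P ⟶ Y) (f : X ⟶ Z) (g : Y ⟶ Z),
      IsPullback fst snd f g → IsRegEpi f → IsRegEpi snd

/-- `(p, q)` is an internal equivalence relation on `X` (via generalized elements). -/
structure IsEquivalenceRelationPair {R X : C} (p q : R ⟶ X) : Prop where
  jointly_mono : ∀ {Z : C} (a b : Z ⟶ R), a ≫ p = b ≫ p → a ≫ q = b ≫ q → a = b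
  refl : ∀ {Z : C} (x : Z ⟶ X), ∃ r : Z ⟶ R, r ≫ p = x ∧ r ≫ q = x
  symm : ∀ {Z : C} (r : Z ⟶ R), ∃ s : Z ⟶ R, s ≫ p = r ≫ q ∧ s ≫ q = r ≫ p
  trans : ∀ {Z : C} (r s : Z ⟶ R), r ≫ q = s ≫ p →
    ∃ t : Z ⟶ R, t ≫ p = r ≫ p ∧ t ≫ q = s ≫ q

/-- An exact category: regular and every equivalence relation is effective. -/
structure IsExactCategory (C : Type u) [Category.{v} C] : Prop extends IsRegularCategory C where
  effectiveEquivalenceRelations :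
    ∀ {R X : C} (p q : R ⟶ X), IsEquivalenceRelationPair p q →
      ∃ (Y : C) (f : X ⟶ Y), IsKernelPair f p q

/-- Locally finitely presentable category. -/
structure IsLFP (C : Type u) [Category.{v} C] : Prop where
  hasColimits : HasColimitsOfSize.{v, v} C
  exists_generator : ∃ (ι : Type v) (G : ι → C),
    ObjectProperty.IsDetecting (fun X => X ∈ Set.range G) ∧ ∀ i, FinPres (G i)

/-- A finitary quasivariety: cocomplete with a small strong generator of finitely
presentable regular projective objects. -/
structure IsFinitaryQuasivariety (C : Type u) [Category.{v} C] : Prop where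
  hasColimits : HasColimitsOfSize.{v, v} C
  exists_generator : ∃ (ι : Type v) (G : ι → C),
    ObjectProperty.IsDetecting (fun X => X ∈ Set.range G) ∧ ∀ i, FinPres (G i) ∧ RegProjective (G i)

/-- The injectivity class determined by a family of morphisms. -/
def Inj {L : Type u} [Category.{v} L] {ι : Type w} (A B : ι → L) (h : ∀ i, A i ⟶ B i) :
    Set L :=
  {X | ∀ (i : ι) (g : A i ⟶ X), ∃ g' : B i ⟶ X, h i ≫ g' = g}

/-- `p : X ⟶ S` is a weak reflection of `X` into `D`. -/
def WeakReflection {L : Type u} [Category.{v} L] (D : Set L) {X S : L} (p : X ⟶ S) : Prop :=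
  S ∈ D ∧ ∀ T ∈ D, ∀ g : X ⟶ T, ∃ k : S ⟶ T, p ≫ k = g


open MonoidalCategory

/-- The external product of two `Type`-valued functors. -/
def externalProd {C : Type v} [SmallCategory C] (F G : C ⥤ Type v) :
    C × C ⥤ Type v where
  obj x := F.obj x.1 × G.obj x.2
  map f := TypeCat.ofHom fun p => (F.map f.1 p.1, G.map f.2 p.2)
  map_id x := by
    ext p <;> simp
  map_comp f g := by
    ext p <;> simp

/-- The tensor product, as a functor `C × C ⥤ C`. -/
def tensorF (C : Type v) [SmallCategory C] [MonoidalCategory C] : C × C ⥤ C :=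
  Functor.uncurry.obj (curriedTensor C)


end Paper

/-!
Write `T` as a pointwise left Kan extension of `F ⊠ G` along `L : C × C ⥤ D` (here `L = ⊗`).
Every element of `T c` is then of the form `T.map f (α (x, y))` with `f : L (a, b) ⟶ c`,
`x : F a`, `y : G b`, and such representatives are identified along morphisms of `C × C`.
Given representatives over `c` and `d`, the pairs `(x, x') : F (a ⨯ a')`, `(y, y') : G (b ⨯ b')`
and the induced map `L (a ⨯ a', b ⨯ b') ⟶ c ⨯ d` represent an element of `T (c ⨯ d)` projecting
to both, so `T (c ⨯ d) → T c × T d` is onto. This pairing respects the identifications in each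
variable separately, hence descends to a map `T c × T d → T (c ⨯ d)`; pulling back along the
diagonals of `a` and `b` shows that it is a left inverse. For the terminal object, any two
elements of `T ⊤` are the two projections of one element of `T (⊤ ⨯ ⊤)`.
-/

open Functor MonoidalCategory
open scoped CategoryTheory.Prod

namespace Paper

section ProductsInTypes

variable {C : Type*} [Category C] (F : C ⥤ Type*)

lemma binaryProductIso_hom_prodComparison_apply [HasBinaryProducts C] (a a' : C)
    (z : F.obj (a ⨯ a')) :
    (Types.binaryProductIso _ _).hom (prodComparison F a a' z) =
      (F.map prod.fst z, F.map prod.snd z) :=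
  Prod.ext
    ((ConcreteCategory.congr_hom (Types.binaryProductIso_hom_comp_fst _ _) _).trans
      (ConcreteCategory.congr_hom (prodComparison_fst F a a') z))
    ((ConcreteCategory.congr_hom (Types.binaryProductIso_hom_comp_snd _ _) _).trans
      (ConcreteCategory.congr_hom (prodComparison_snd F a a') z))

lemma isIso_prodComparison_of_bijective [HasBinaryProducts C] (a a' : C)
    (h : Function.Bijective fun z : F.obj (a ⨯ a') => (F.map prod.fst z, F.map prod.snd z)) :
    IsIso (prodComparison F a a') := by
  have hcomp : prodComparison F a a' ≫ (Types.binaryProductIso _ _).hom =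
      TypeCat.ofHom fun z => (F.map prod.fst z, F.map prod.snd z) := by
    ext z
    · exact congrArg Prod.fst (binaryProductIso_hom_prodComparison_apply F a a' z)
    · exact congrArg Prod.snd (binaryProductIso_hom_prodComparison_apply F a a' z)
  have : IsIso (prodComparison F a a' ≫ (Types.binaryProductIso _ _).hom) := by
    rw [hcomp, isIso_iff_bijective]
    exact h
  exact IsIso.of_isIso_comp_right (prodComparison F a a') (Types.binaryProductIso _ _).hom

lemma preservesLimit_empty_of_subsingleton [HasTerminal C] (h₁ : Nonempty (F.obj (⊤_ C)))
    (h₂ : Subsingleton (F.obj (⊤_ C))) : PreservesLimit (Functor.empty.{0} C) F :=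
  preservesLimit_of_preserves_limit_cone terminalIsTerminal
    ((isLimitMapConeEmptyConeEquiv F _).symm
      ((Types.isTerminalEquivUnique _).symm (uniqueOfSubsingleton h₁.some)))

lemma nonempty_obj_terminal [HasTerminal C] [PreservesLimit (Functor.empty.{0} C) F] :
    Nonempty (F.obj (⊤_ C)) :=
  ⟨(Types.isTerminalEquivUnique _ (terminalIsTerminal.isTerminalObj F _)).default⟩

variable [HasBinaryProducts C] [PreservesLimitsOfShape (Discrete WalkingPair) F]

noncomputable def mapProdEquiv (a a' : C) : F.obj (a ⨯ a') ≃ F.obj a × F.obj a' :=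
  (PreservesLimitPair.iso F a a' ≪≫ Types.binaryProductIso _ _).toEquiv

lemma mapProdEquiv_apply {a a' : C} (z : F.obj (a ⨯ a')) :
    mapProdEquiv F a a' z = (F.map prod.fst z, F.map prod.snd z) :=
  binaryProductIso_hom_prodComparison_apply F a a' z

lemma eq_mapProdEquiv_symm_iff {a a' : C} (z : F.obj (a ⨯ a')) (x : F.obj a) (x' : F.obj a') :
    z = (mapProdEquiv F a a').symm (x, x') ↔ F.map prod.fst z = x ∧ F.map prod.snd z = x' := by
  rw [Equiv.eq_symm_apply, mapProdEquiv_apply, Prod.mk.injEq]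

@[simp]
lemma map_fst_mapProdEquiv_symm {a a' : C} (x : F.obj a) (x' : F.obj a') :
    F.map prod.fst ((mapProdEquiv F a a').symm (x, x')) = x :=
  ((eq_mapProdEquiv_symm_iff F _ x x').1 rfl).1

@[simp]
lemma map_snd_mapProdEquiv_symm {a a' : C} (x : F.obj a) (x' : F.obj a') :
    F.map prod.snd ((mapProdEquiv F a a').symm (x, x')) = x' :=
  ((eq_mapProdEquiv_symm_iff F _ x x').1 rfl).2

lemma map_prodMap_mapProdEquiv_symm {a a' b b' : C} (u : a ⟶ b) (u' : a' ⟶ b')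
    (x : F.obj a) (x' : F.obj a') :
    F.map (prod.map u u') ((mapProdEquiv F a a').symm (x, x')) =
      (mapProdEquiv F b b').symm (F.map u x, F.map u' x') := by
  rw [eq_mapProdEquiv_symm_iff, ← Functor.map_comp_apply, ← Functor.map_comp_apply,
    prod.map_fst, prod.map_snd, Functor.map_comp_apply, Functor.map_comp_apply,
    map_fst_mapProdEquiv_symm, map_snd_mapProdEquiv_symm]
  exact ⟨rfl, rfl⟩

lemma map_diag_eq_mapProdEquiv_symm {a : C} (x : F.obj a) :
    F.map (Limits.diag a) x = (mapProdEquiv F a a).symm (x, x) := by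
  rw [eq_mapProdEquiv_symm_iff, ← Functor.map_comp_apply, ← Functor.map_comp_apply,
    Limits.diag, prod.lift_fst, prod.lift_snd, Functor.map_id_apply]
  exact ⟨rfl, rfl⟩

end ProductsInTypes

section LeftKanExtension

variable {C : Type v} [SmallCategory C] {D : Type u} [Category.{v} D] {L : C × C ⥤ D}
  {F G : C ⥤ Type v} {T : D ⥤ Type v} (α : externalProd F G ⟶ L ⋙ T)

def lanElem {c : D} {a b : C} (f : L.obj (a, b) ⟶ c) (x : F.obj a) (y : G.obj b) : T.obj c :=
  T.map f (α.app (a, b) (x, y))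

lemma map_lanElem {c c' : D} {a b : C} (f : L.obj (a, b) ⟶ c) (h : c ⟶ c')
    (x : F.obj a) (y : G.obj b) : T.map h (lanElem α f x y) = lanElem α (f ≫ h) x y :=
  (Functor.map_comp_apply T f h _).symm

lemma lanElem_map_comp {c : D} {a b a₁ b₁ : C} (u : a ⟶ a₁) (v : b ⟶ b₁)
    (f : L.obj (a₁, b₁) ⟶ c) (x : F.obj a) (y : G.obj b) :
    lanElem α (L.map (u ×ₘ v) ≫ f) x y =
      lanElem α f (F.map u x) (G.map v y) := by
  rw [lanElem, Functor.map_comp_apply]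
  exact congrArg (T.map f) (NatTrans.naturality_apply α (u ×ₘ v)
    ((x, y) : F.obj a × G.obj b)).symm

lemma exists_lanElem_eq (hT : (LeftExtension.mk T α).IsPointwiseLeftKanExtension) {c : D}
    (t : T.obj c) : ∃ (a b : C) (f : L.obj (a, b) ⟶ c) (x : F.obj a) (y : G.obj b),
      lanElem α f x y = t := by
  obtain ⟨j, z, rfl⟩ := Types.jointly_surjective _ (hT c) t
  exact ⟨j.left.1, j.left.2, j.hom, z.1, z.2, rfl⟩

variable [HasBinaryProducts C] [HasBinaryProducts D]

noncomputable def pairHom {c d : D} {a b a' b' : C} (f : L.obj (a, b) ⟶ c)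
    (f' : L.obj (a', b') ⟶ d) : L.obj (a ⨯ a', b ⨯ b') ⟶ c ⨯ d :=
  prod.lift (L.map (prod.fst ×ₘ prod.fst) ≫ f) (L.map (prod.snd ×ₘ prod.snd) ≫ f')

lemma map_prodMap_comp_pairHom {c d : D} {a b a' b' a₁ b₁ a₁' b₁' : C}
    (u : a ⟶ a₁) (v : b ⟶ b₁) (u' : a' ⟶ a₁') (v' : b' ⟶ b₁')
    (f : L.obj (a₁, b₁) ⟶ c) (f' : L.obj (a₁', b₁') ⟶ d) :
    L.map (prod.map u u' ×ₘ prod.map v v') ≫ pairHom f f' =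
      pairHom (L.map (u ×ₘ v) ≫ f) (L.map (u' ×ₘ v') ≫ f') := by
  ext <;> simp [pairHom, ← L.map_comp_assoc]

lemma map_diag_comp_pairHom {c d : D} {a b : C} (g : L.obj (a, b) ⟶ c ⨯ d) :
    L.map (Limits.diag a ×ₘ Limits.diag b) ≫ pairHom (g ≫ prod.fst) (g ≫ prod.snd) = g := by
  simp only [pairHom, prod.comp_lift, ← L.map_comp_assoc, prod_comp, Limits.diag, prod.lift_fst,
    prod.lift_snd, ← prod_id, L.map_id, Category.id_comp]
  rw [← prod.comp_lift, prod.lift_fst_snd, Category.comp_id]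

variable [PreservesLimitsOfShape (Discrete WalkingPair) F]
  [PreservesLimitsOfShape (Discrete WalkingPair) G]

noncomputable def lanElemProd {c d : D} {a b a' b' : C} (f : L.obj (a, b) ⟶ c)
    (f' : L.obj (a', b') ⟶ d) (x : F.obj a) (x' : F.obj a') (y : G.obj b) (y' : G.obj b') :
    T.obj (c ⨯ d) :=
  lanElem α (pairHom f f') ((mapProdEquiv F a a').symm (x, x'))
    ((mapProdEquiv G b b').symm (y, y'))

lemma map_fst_lanElemProd {c d : D} {a b a' b' : C} (f : L.obj (a, b) ⟶ c)
    (f' : L.obj (a', b') ⟶ d) (x : F.obj a) (x' : F.obj a') (y : G.obj b) (y' : G.obj b') :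
    T.map prod.fst (lanElemProd α f f' x x' y y') = lanElem α f x y := by
  rw [lanElemProd, map_lanElem, pairHom, prod.lift_fst, lanElem_map_comp,
    map_fst_mapProdEquiv_symm, map_fst_mapProdEquiv_symm]

lemma map_snd_lanElemProd {c d : D} {a b a' b' : C} (f : L.obj (a, b) ⟶ c)
    (f' : L.obj (a', b') ⟶ d) (x : F.obj a) (x' : F.obj a') (y : G.obj b) (y' : G.obj b') :
    T.map prod.snd (lanElemProd α f f' x x' y y') = lanElem α f' x' y' := by
  rw [lanElemProd, map_lanElem, pairHom, prod.lift_snd, lanElem_map_comp,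
    map_snd_mapProdEquiv_symm, map_snd_mapProdEquiv_symm]

lemma lanElemProd_map_comp {c d : D} {a b a' b' a₁ b₁ a₁' b₁' : C}
    (u : a ⟶ a₁) (v : b ⟶ b₁) (u' : a' ⟶ a₁') (v' : b' ⟶ b₁')
    (f : L.obj (a₁, b₁) ⟶ c) (f' : L.obj (a₁', b₁') ⟶ d)
    (x : F.obj a) (x' : F.obj a') (y : G.obj b) (y' : G.obj b') :
    lanElemProd α (L.map (u ×ₘ v) ≫ f) (L.map (u' ×ₘ v') ≫ f') x x' y y' =
      lanElemProd α f f' (F.map u x) (F.map u' x') (G.map v y) (G.map v' y') := by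
  rw [lanElemProd, lanElemProd, ← map_prodMap_comp_pairHom, lanElem_map_comp,
    map_prodMap_mapProdEquiv_symm, map_prodMap_mapProdEquiv_symm]

lemma lanElemProd_map_comp_left {c d : D} {a b a' b' a₁ b₁ : C} (u : a ⟶ a₁) (v : b ⟶ b₁)
    (f : L.obj (a₁, b₁) ⟶ c) (f' : L.obj (a', b') ⟶ d)
    (x : F.obj a) (x' : F.obj a') (y : G.obj b) (y' : G.obj b') :
    lanElemProd α (L.map (u ×ₘ v) ≫ f) f' x x' y y' =
      lanElemProd α f f' (F.map u x) x' (G.map v y) y' := by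
  simpa [← prod_id] using lanElemProd_map_comp α u v (𝟙 a') (𝟙 b') f f' x x' y y'

lemma lanElemProd_map_comp_right {c d : D} {a b a' b' a₁' b₁' : C} (u' : a' ⟶ a₁')
    (v' : b' ⟶ b₁') (f : L.obj (a, b) ⟶ c) (f' : L.obj (a₁', b₁') ⟶ d)
    (x : F.obj a) (x' : F.obj a') (y : G.obj b) (y' : G.obj b') :
    lanElemProd α f (L.map (u' ×ₘ v') ≫ f') x x' y y' =
      lanElemProd α f f' x (F.map u' x') y (G.map v' y') := by
  simpa [← prod_id] using lanElemProd_map_comp α (𝟙 a) (𝟙 b) u' v' f f' x x' y y'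

lemma lanElemProd_diag {c d : D} {a b : C} (g : L.obj (a, b) ⟶ c ⨯ d) (x : F.obj a)
    (y : G.obj b) : lanElemProd α (g ≫ prod.fst) (g ≫ prod.snd) x x y y = lanElem α g x y := by
  rw [lanElemProd, ← map_diag_eq_mapProdEquiv_symm, ← map_diag_eq_mapProdEquiv_symm,
    ← lanElem_map_comp, map_diag_comp_pairHom]

noncomputable def pairWithCocone {c : D} {a b : C} (f : L.obj (a, b) ⟶ c) (x : F.obj a)
    (y : G.obj b) (d : D) : Cocone (CostructuredArrow.proj L d ⋙ externalProd F G) where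
  pt := T.obj (c ⨯ d)
  ι.app j := TypeCat.ofHom fun z => lanElemProd α f j.hom x z.1 y z.2
  ι.naturality j j' φ := by
    ext z
    have hφ : L.map (φ.left.1 ×ₘ φ.left.2) ≫ j'.hom = j.hom := CostructuredArrow.w φ
    rw [← hφ]
    exact (lanElemProd_map_comp_right α φ.left.1 φ.left.2 f j'.hom x z.1 y z.2).symm

lemma desc_pairWithCocone_map_comp {d : D}
    (hd : IsColimit ((LeftExtension.mk T α).coconeAt d)) {c : D} {a b a₁ b₁ : C}
    (u : a ⟶ a₁) (v : b ⟶ b₁) (f : L.obj (a₁, b₁) ⟶ c) (x : F.obj a) (y : G.obj b) :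
    hd.desc (pairWithCocone α (L.map (u ×ₘ v) ≫ f) x y d) =
      hd.desc (pairWithCocone α f (F.map u x) (G.map v y) d) := by
  refine hd.hom_ext fun j => ?_
  rw [hd.fac]
  erw [hd.fac]
  ext z
  exact lanElemProd_map_comp_left α u v f j.hom x z.1 y z.2

noncomputable def pairingCocone (c : D) {d : D}
    (hd : IsColimit ((LeftExtension.mk T α).coconeAt d)) :
    Cocone (CostructuredArrow.proj L c ⋙ externalProd F G) where
  pt := T.obj d → T.obj (c ⨯ d)
  ι.app j := TypeCat.ofHom fun z => ⇑(hd.desc (pairWithCocone α j.hom z.1 z.2 d))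
  ι.naturality j j' φ := by
    ext z
    have hφ : L.map (φ.left.1 ×ₘ φ.left.2) ≫ j'.hom = j.hom := CostructuredArrow.w φ
    have := desc_pairWithCocone_map_comp α hd φ.left.1 φ.left.2 j'.hom z.1 z.2
    rw [hφ] at this
    exact congrArg (fun g : T.obj d ⟶ T.obj (c ⨯ d) => ⇑g) this.symm

noncomputable def lanPairing {c d : D} (hc : IsColimit ((LeftExtension.mk T α).coconeAt c))
    (hd : IsColimit ((LeftExtension.mk T α).coconeAt d)) : T.obj c → T.obj d → T.obj (c ⨯ d) :=
  hc.desc (pairingCocone α c hd)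

lemma lanPairing_lanElem {c d : D} (hc : IsColimit ((LeftExtension.mk T α).coconeAt c))
    (hd : IsColimit ((LeftExtension.mk T α).coconeAt d)) {a b a' b' : C} (f : L.obj (a, b) ⟶ c)
    (f' : L.obj (a', b') ⟶ d) (x : F.obj a) (x' : F.obj a') (y : G.obj b) (y' : G.obj b') :
    lanPairing α hc hd (lanElem α f x y) (lanElem α f' x' y') = lanElemProd α f f' x x' y y' := by
  have hc' := ConcreteCategory.congr_hom (hc.fac (pairingCocone α c hd) (CostructuredArrow.mk f))
    ((x, y) : F.obj a × G.obj b)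
  have hd' := ConcreteCategory.congr_hom
    (hd.fac (pairWithCocone α f x y d) (CostructuredArrow.mk f')) ((x', y') : F.obj a' × G.obj b')
  exact (congrFun hc' _).trans hd'

lemma bijective_lan_map_fst_map_snd (hT : (LeftExtension.mk T α).IsPointwiseLeftKanExtension)
    (c d : D) :
    Function.Bijective fun t : T.obj (c ⨯ d) => (T.map prod.fst t, T.map prod.snd t) := by
  constructor
  · refine Function.LeftInverse.injective (g := fun p => lanPairing α (hT c) (hT d) p.1 p.2) ?_
    intro t
    obtain ⟨a, b, g, x, y, rfl⟩ := exists_lanElem_eq α hT t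
    dsimp only
    rw [map_lanElem, map_lanElem]
    exact (lanPairing_lanElem α (hT c) (hT d) _ _ x x y y).trans (lanElemProd_diag α g x y)
  · rintro ⟨s, t⟩
    obtain ⟨a, b, f, x, y, rfl⟩ := exists_lanElem_eq α hT s
    obtain ⟨a', b', f', x', y', rfl⟩ := exists_lanElem_eq α hT t
    exact ⟨lanElemProd α f f' x x' y y',
      Prod.ext (map_fst_lanElemProd α f f' x x' y y') (map_snd_lanElemProd α f f' x x' y y')⟩

lemma subsingleton_lan_obj_terminal [HasTerminal D]
    (hT : (LeftExtension.mk T α).IsPointwiseLeftKanExtension) :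
    Subsingleton (T.obj (⊤_ D)) := by
  constructor
  intro s t
  obtain ⟨a, b, f, x, y, rfl⟩ := exists_lanElem_eq α hT s
  obtain ⟨a', b', f', x', y', rfl⟩ := exists_lanElem_eq α hT t
  rw [← map_fst_lanElemProd α f f' x x' y y', ← map_snd_lanElemProd α f f' x x' y y',
    terminal.hom_ext (prod.fst : (⊤_ D) ⨯ (⊤_ D) ⟶ _) prod.snd]

end LeftKanExtension

theorem preservesFiniteProducts_of_isPointwiseLeftKanExtension {C : Type v} [SmallCategory C]
    {D : Type u} [Category.{v} D] {L : C × C ⥤ D} {F G : C ⥤ Type v} {T : D ⥤ Type v}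
    [HasFiniteProducts C] [HasFiniteProducts D] [PreservesFiniteProducts F]
    [PreservesFiniteProducts G] (α : externalProd F G ⟶ L ⋙ T)
    (hT : (LeftExtension.mk T α).IsPointwiseLeftKanExtension) : PreservesFiniteProducts T := by
  have : ∀ {c d : D}, IsIso (prodComparison T c d) :=
    isIso_prodComparison_of_bijective T _ _ (bijective_lan_map_fst_map_snd α hT _ _)
  have := preservesBinaryProducts_of_isIso_prodComparison T
  have := preservesLimit_empty_of_subsingleton T
    ⟨lanElem α (terminal.from (L.obj (⊤_ C, ⊤_ C))) (nonempty_obj_terminal F).some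
      (nonempty_obj_terminal G).some⟩
    (subsingleton_lan_obj_terminal α hT)
  have := preservesLimitsOfShape_pempty_of_preservesTerminal T
  exact .of_preserves_binary_and_terminal T

theorem statement7_general (C : Type v) [SmallCategory C] [HasFiniteProducts C]
    [MonoidalCategory C]
    (F G : C ⥤ Type v) (hF : PreservesFiniteProducts F) (hG : PreservesFiniteProducts G)
    (T : C ⥤ Type v) (alpha : externalProd F G ⟶ tensorF C ⋙ T)
    (hT : T.IsLeftKanExtension alpha) :
    PreservesFiniteProducts T := by
  have : (tensorF C).HasPointwiseLeftKanExtension (externalProd F G) := fun _ => inferInstance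
  exact preservesFiniteProducts_of_isPointwiseLeftKanExtension alpha
    (isPointwiseLeftKanExtensionOfIsLeftKanExtension T alpha)

/-- Let `C` be a small category with finite products and a symmetric
monoidal structure whose tensor preserves finite products in each variable.  If
`F, G : C ⥤ Set` preserve finite products, then so does their Day convolution
`F ⊗ G`, i.e. any left Kan extension of the external product `F ⊠ G` along the
tensor functor `⊗ : C × C ⥤ C`. -/
theorem statement7 (C : Type v) [SmallCategory C] [HasFiniteProducts C]
    [MonoidalCategory C] [SymmetricCategory C]
    (htl : ∀ c : C, PreservesFiniteProducts (tensorLeft c))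
    (htr : ∀ c : C, PreservesFiniteProducts (tensorRight c))
    (F G : C ⥤ Type v) (hF : PreservesFiniteProducts F) (hG : PreservesFiniteProducts G)
    (T : C ⥤ Type v) (alpha : externalProd F G ⟶ tensorF C ⋙ T)
    (hT : T.IsLeftKanExtension alpha) :
    PreservesFiniteProducts T :=
  statement7_general C F G hF hG T alpha hT

end Paper
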